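/- arXiv:0705.3243 — 2 statements merged into one kernel-verified Lean document; each statement's English description precedes it below -/
import Mathlib

section
/- For every ε ∈ (0,1] there exist constants c₁, c₂ > 0, depending only on ε, such that the following holds: in the capture–recapture model with n items and capture probabilities p₁, p₂ ∈ [ε, 1], for every real t > 0, the probability that C = 0 or |A·B/C − n| > t·√n is at most c₁·exp(−c₂·min(t², n)). In particular, the capture–recapture estimate A·B/C of the population size n is concentrated in the range n ± O(√n). -/
open MeasureTheory
open scoped ENNReal

/-- The Bernoulli(p) measure on `Bool` (for `p ∈ [0,1]` this is the genuine
Bernoulli measure giving `true` probability `p`). -/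
noncomputable def bernoulliMeasure (p : ℝ) : Measure Bool :=
  (PMF.bernoulli (min (Real.toNNReal p) 1) (min_le_right _ _)).toMeasure

/-- The capture–recapture model with `n` items and capture probabilities `p₁, p₂`:
for each item, an independent pair of Bernoulli indicators (captured in phase 1,
captured in phase 2). -/
noncomputable def crMeasure (n : ℕ) (p₁ p₂ : ℝ) : Measure (Fin n → Bool × Bool) :=
  Measure.pi fun _ => (bernoulliMeasure p₁).prod (bernoulliMeasure p₂)

/-- The number of items captured in phase 1. -/
def captA {n : ℕ} (ω : Fin n → Bool × Bool) : ℕ :=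
  (Finset.univ.filter fun i => (ω i).1 = true).card

/-- The number of items captured in phase 2. -/
def captB {n : ℕ} (ω : Fin n → Bool × Bool) : ℕ :=
  (Finset.univ.filter fun i => (ω i).2 = true).card

/-- The number of items captured in both phases. -/
def captC {n : ℕ} (ω : Fin n → Bool × Bool) : ℕ :=
  (Finset.univ.filter fun i => (ω i).1 = true ∧ (ω i).2 = true).card

open Real ProbabilityTheory

lemma exp_le_quad {u : ℝ} (h0 : 0 ≤ u) (h1 : u ≤ 1) : Real.exp u ≤ 1 + u + 2 * u ^ 2 := by
  have h := Real.exp_bound' h0 h1 (n := 2) (by norm_num)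
  simp [Finset.sum_range_succ] at h
  nlinarith [sq_nonneg u]

lemma integral_pi_pow {α : Type*} [MeasurableSpace α] (ν : Measure α) [IsProbabilityMeasure ν]
    (n : ℕ) (g : α → ℝ) :
    ∫ ω : Fin n → α, ∏ i, g (ω i) ∂(Measure.pi fun _ => ν) = (∫ x, g x ∂ν) ^ n := by
  letI : MeasureSpace α := { volume := ν }
  have h := MeasureTheory.integral_fintype_prod_eq_pow (ι := Fin n) (μ := ν) g
  simp only [Fintype.card_fin] at h
  exact h

lemma pi_tail_bound {α : Type*} [MeasurableSpace α] [Fintype α] [MeasurableSingletonClass α]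
    (ν : Measure α) [IsProbabilityMeasure ν]
    (f : α → ℝ) (hf0 : ∀ x, 0 ≤ f x) (hf1 : ∀ x, f x ≤ 1)
    (n : ℕ) (s : ℝ) (hs : 0 ≤ s) (hsn : s ≤ 4 * n) :
    Measure.pi (fun _ : Fin n => ν)
      {ω | (n : ℝ) * (∫ x, f x ∂ν) + s ≤ ∑ i, f (ω i)} ≤
      ENNReal.ofReal (Real.exp (-(s ^ 2) / (8 * n))) := by
  rcases Nat.eq_zero_or_pos n with hn | hn
  · subst hn
    have hs0 : s = 0 := le_antisymm (by simpa using hsn) hs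
    subst hs0
    norm_num
  · set μ : Measure (Fin n → α) := Measure.pi (fun _ => ν) with hμ
    have hnR : (0 : ℝ) < n := by exact_mod_cast hn
    set lam : ℝ := s / (4 * n) with hlam
    have hlam0 : 0 ≤ lam := div_nonneg hs (by positivity)
    have hlam1 : lam ≤ 1 := by
      rw [hlam, div_le_one (by positivity)]; simpa using hsn
    set m : ℝ := ∫ x, f x ∂ν with hm
    have hm0 : 0 ≤ m := integral_nonneg hf0
    set X : (Fin n → α) → ℝ := fun ω => ∑ i, f (ω i) with hX
    have hint : Integrable (fun ω => Real.exp (lam * X ω)) μ := Integrable.of_finite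
    have hch := measure_ge_le_exp_mul_mgf (μ := μ) (X := X) ((n : ℝ) * m + s) hlam0 hint
    -- compute/bound the mgf
    have hmgf : mgf X μ lam = (∫ x, Real.exp (lam * f x) ∂ν) ^ n := by
      have : ∀ ω : Fin n → α, Real.exp (lam * X ω) = ∏ i, Real.exp (lam * f (ω i)) := by
        intro ω
        rw [hX, Finset.mul_sum, Real.exp_sum]
      rw [mgf]
      calc ∫ ω, Real.exp (lam * X ω) ∂μ = ∫ ω, ∏ i, Real.exp (lam * f (ω i)) ∂μ := by
            exact integral_congr_ae (Filter.Eventually.of_forall this)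
        _ = _ := integral_pi_pow ν n (fun x => Real.exp (lam * f x))
    have hB0 : 0 ≤ ∫ x, Real.exp (lam * f x) ∂ν := integral_nonneg fun x => (Real.exp_pos _).le
    have hBle : ∫ x, Real.exp (lam * f x) ∂ν ≤ Real.exp (lam * m + 2 * lam ^ 2) := by
      have h1 : ∫ x, Real.exp (lam * f x) ∂ν ≤ ∫ x, (1 + lam * f x + 2 * lam ^ 2) ∂ν := by
        refine integral_mono Integrable.of_finite Integrable.of_finite fun x => ?_
        have hu0 : 0 ≤ lam * f x := mul_nonneg hlam0 (hf0 x)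
        have hu1 : lam * f x ≤ 1 := by
          calc lam * f x ≤ lam * 1 := by
                exact mul_le_mul_of_nonneg_left (hf1 x) hlam0
            _ ≤ 1 := by simpa using hlam1
        calc Real.exp (lam * f x) ≤ 1 + lam * f x + 2 * (lam * f x) ^ 2 := exp_le_quad hu0 hu1
          _ ≤ 1 + lam * f x + 2 * lam ^ 2 := by
              have hfx2 : f x ^ 2 ≤ 1 := by nlinarith [hf0 x, hf1 x]
              have : (lam * f x) ^ 2 ≤ lam ^ 2 := by
                rw [mul_pow]
                nlinarith [sq_nonneg lam, hfx2]
              linarith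
      have h2 : ∫ x, (1 + lam * f x + 2 * lam ^ 2) ∂ν = 1 + lam * m + 2 * lam ^ 2 := by
        rw [integral_add (Integrable.of_finite) (integrable_const _),
          integral_add (integrable_const _) (Integrable.of_finite), integral_const,
          integral_const_mul, ← hm]
        simp
      have h3 : (1 : ℝ) + lam * m + 2 * lam ^ 2 ≤ Real.exp (lam * m + 2 * lam ^ 2) := by
        have := Real.add_one_le_exp (lam * m + 2 * lam ^ 2)
        linarith
      linarith
    have hfin : (μ {ω | (n : ℝ) * m + s ≤ X ω}) ≠ ⊤ := measure_ne_top _ _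
    rw [ENNReal.le_ofReal_iff_toReal_le hfin (Real.exp_pos _).le]
    calc (μ {ω | (n : ℝ) * m + s ≤ X ω}).toReal
        ≤ Real.exp (-lam * ((n : ℝ) * m + s)) * mgf X μ lam := hch
      _ ≤ Real.exp (-lam * ((n : ℝ) * m + s)) * Real.exp (lam * m + 2 * lam ^ 2) ^ n := by
          rw [hmgf]
          exact mul_le_mul_of_nonneg_left (pow_le_pow_left₀ hB0 hBle n) (Real.exp_pos _).le
      _ = Real.exp (-lam * ((n : ℝ) * m + s) + n * (lam * m + 2 * lam ^ 2)) := by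
          rw [← Real.exp_nat_mul, ← Real.exp_add]
      _ ≤ Real.exp (-(s ^ 2) / (8 * n)) := by
          apply Real.exp_le_exp.2
          have : -lam * ((n : ℝ) * m + s) + n * (lam * m + 2 * lam ^ 2)
              = -lam * s + 2 * n * lam ^ 2 := by ring
          rw [this, hlam]
          apply le_of_eq
          field_simp
          ring

lemma ber_apply (p : ℝ) (h1 : p ≤ 1) (b : Bool) :
    bernoulliMeasure p {b} = cond b (ENNReal.ofReal p) (1 - ENNReal.ofReal p) := by
  rw [_root_.bernoulliMeasure, PMF.toMeasure_apply_singleton _ _ (measurableSet_singleton b)]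
  have h : min (Real.toNNReal p) 1 = Real.toNNReal p := min_eq_left (Real.toNNReal_le_one.2 h1)
  cases b <;> simp [PMF.bernoulli_apply, h, ENNReal.ofReal, ENNReal.coe_sub]

instance (p : ℝ) : IsProbabilityMeasure (bernoulliMeasure p) := by
  rw [_root_.bernoulliMeasure]; infer_instance

lemma integral_crStep (p₁ p₂ : ℝ) (h₁0 : 0 ≤ p₁) (h₁1 : p₁ ≤ 1) (h₂0 : 0 ≤ p₂) (h₂1 : p₂ ≤ 1)
    (f : Bool × Bool → ℝ) :
    ∫ x, f x ∂((_root_.bernoulliMeasure p₁).prod (_root_.bernoulliMeasure p₂)) =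
      p₁ * p₂ * f (true, true) + p₁ * (1 - p₂) * f (true, false)
        + (1 - p₁) * p₂ * f (false, true) + (1 - p₁) * (1 - p₂) * f (false, false) := by
  have hsing : ∀ a b : Bool, ((_root_.bernoulliMeasure p₁).prod (_root_.bernoulliMeasure p₂)) {(a, b)}
      = _root_.bernoulliMeasure p₁ {a} * _root_.bernoulliMeasure p₂ {b} := by
    intro a b
    rw [← Set.singleton_prod_singleton, Measure.prod_prod]
  have e₁ : ((1 : ℝ≥0∞) - ENNReal.ofReal p₁).toReal = 1 - p₁ := by
    rw [ENNReal.toReal_sub_of_le (ENNReal.ofReal_le_one.2 h₁1) ENNReal.one_ne_top]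
    simp [ENNReal.toReal_ofReal h₁0]
  have e₂ : ((1 : ℝ≥0∞) - ENNReal.ofReal p₂).toReal = 1 - p₂ := by
    rw [ENNReal.toReal_sub_of_le (ENNReal.ofReal_le_one.2 h₂1) ENNReal.one_ne_top]
    simp [ENNReal.toReal_ofReal h₂0]
  rw [integral_fintype Integrable.of_finite, Fintype.sum_prod_type]
  simp only [measureReal_def, Fintype.sum_bool, hsing, ber_apply _ h₁1, ber_apply _ h₂1, Bool.cond_true,
    Bool.cond_false, ENNReal.toReal_mul, e₁, e₂, ENNReal.toReal_ofReal h₁0,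
    ENNReal.toReal_ofReal h₂0, smul_eq_mul]
  ring

set_option maxHeartbeats 1000000 in
lemma algebra_key {ε p₁ p₂ t n A B C s r : ℝ}
    (hε0 : 0 < ε) (hε1 : ε ≤ 1) (hp₁ : ε ≤ p₁) (hp₁1 : p₁ ≤ 1) (hp₂ : ε ≤ p₂) (hp₂1 : p₂ ≤ 1)
    (ht : 0 < t) (hr2 : r ^ 2 = n) (hr0 : 0 < r) (htr : t ≤ r) (hs : s = ε ^ 2 * t * r / 8)
    (hA : |A - n * p₁| ≤ s) (hB : |B - n * p₂| ≤ s) (hC : |C - n * (p₁ * p₂)| ≤ s) :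
    0 < C ∧ |A * B / C - n| ≤ t * r := by
  have hn0 : 0 < n := by nlinarith
  have htr2 : t * r ≤ n := by nlinarith
  have hsn : s ≤ ε ^ 2 * n / 8 := by
    rw [hs]; nlinarith [mul_le_mul_of_nonneg_left htr2 (sq_nonneg ε)]
  have hs0 : 0 < s := by rw [hs]; positivity
  have hε2 : ε ^ 2 ≤ 1 := by nlinarith
  have hsn' : s ≤ n := by nlinarith [mul_le_mul_of_nonneg_right hε2 hn0.le]
  obtain ⟨hA1, hA2⟩ := abs_le.1 hA
  obtain ⟨hB1, hB2⟩ := abs_le.1 hB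
  obtain ⟨hC1, hC2⟩ := abs_le.1 hC
  have hεp : ε ^ 2 ≤ p₁ * p₂ := by nlinarith
  have hCge : 7 / 8 * (ε ^ 2 * n) ≤ C := by
    nlinarith [mul_le_mul_of_nonneg_left hεp hn0.le]
  have hC0 : 0 < C := by nlinarith
  refine ⟨hC0, ?_⟩
  have hrw : A * B / C - n = (A * B - n * C) / C := by field_simp
  rw [hrw, abs_div, abs_of_pos hC0, div_le_iff₀ hC0]
  have h1 : |(A - n * p₁) * (B - n * p₂)| ≤ s ^ 2 := by
    rw [abs_mul]
    calc |A - n * p₁| * |B - n * p₂| ≤ s * s := mul_le_mul hA hB (abs_nonneg _) hs0.le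
      _ = s ^ 2 := by ring
  have h2 : |n * p₂ * (A - n * p₁)| ≤ n * s := by
    rw [abs_mul, abs_of_nonneg (show (0:ℝ) ≤ n * p₂ by nlinarith)]
    exact mul_le_mul (by nlinarith) hA (abs_nonneg _) hn0.le
  have h3 : |n * p₁ * (B - n * p₂)| ≤ n * s := by
    rw [abs_mul, abs_of_nonneg (show (0:ℝ) ≤ n * p₁ by nlinarith)]
    exact mul_le_mul (by nlinarith) hB (abs_nonneg _) hn0.le
  have h4 : |n * (C - n * (p₁ * p₂))| ≤ n * s := by
    rw [abs_mul, abs_of_nonneg hn0.le]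
    exact mul_le_mul_of_nonneg_left hC hn0.le
  have hkey : |A * B - n * C| ≤ s ^ 2 + 3 * n * s := by
    have hid : A * B - n * C =
        (A - n * p₁) * (B - n * p₂) + n * p₂ * (A - n * p₁) + n * p₁ * (B - n * p₂)
          - n * (C - n * (p₁ * p₂)) := by ring
    rw [hid]
    have t1 := abs_sub ((A - n * p₁) * (B - n * p₂) + n * p₂ * (A - n * p₁)
      + n * p₁ * (B - n * p₂)) (n * (C - n * (p₁ * p₂)))
    have t2 := abs_add_le ((A - n * p₁) * (B - n * p₂) + n * p₂ * (A - n * p₁))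
      (n * p₁ * (B - n * p₂))
    have t3 := abs_add_le ((A - n * p₁) * (B - n * p₂)) (n * p₂ * (A - n * p₁))
    linarith
  have hgoal : 4 * n * s ≤ t * r * C := by
    have hC' := mul_le_mul_of_nonneg_left hCge (mul_nonneg ht.le hr0.le)
    rw [hs] at *
    nlinarith [mul_nonneg (mul_nonneg (mul_nonneg ht.le hr0.le) hn0.le) (sq_nonneg ε)]
  calc |A * B - n * C| ≤ s ^ 2 + 3 * n * s := hkey
    _ ≤ 4 * n * s := by nlinarith
    _ ≤ t * r * C := hgoal

lemma sum_ind {n : ℕ} (P : Bool × Bool → Prop) [DecidablePred P] (ω : Fin n → Bool × Bool) :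
    ∑ i, (if P (ω i) then (1 : ℝ) else 0) =
      ((Finset.univ.filter fun i => P (ω i)).card : ℝ) := by
  rw [Finset.card_filter]
  push_cast
  rfl

instance crProb (n : ℕ) (p₁ p₂ : ℝ) : IsProbabilityMeasure (crMeasure n p₁ p₂) := by
  rw [crMeasure]; infer_instance

set_option maxHeartbeats 1000000 in
lemma main_case (ε p₁ p₂ : ℝ) (hε0 : 0 < ε) (hε1 : ε ≤ 1)
    (hp₁ : ε ≤ p₁) (hp₁1 : p₁ ≤ 1) (hp₂ : ε ≤ p₂) (hp₂1 : p₂ ≤ 1)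
    (n : ℕ) (t : ℝ) (ht : 0 < t) (htn : t ≤ Real.sqrt n) :
    crMeasure n p₁ p₂
      {ω | captC ω = 0 ∨
        |((captA ω : ℝ) * (captB ω : ℝ)) / (captC ω : ℝ) - (n : ℝ)| > t * Real.sqrt n} ≤
      ENNReal.ofReal (6 * Real.exp (-(ε ^ 4 / 512) * t ^ 2)) := by
  have h10 : (0 : ℝ) ≤ p₁ := le_trans hε0.le hp₁
  have h20 : (0 : ℝ) ≤ p₂ := le_trans hε0.le hp₂
  set ν : Measure (Bool × Bool) := (_root_.bernoulliMeasure p₁).prod (_root_.bernoulliMeasure p₂) with hν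
  haveI : IsProbabilityMeasure ν := by rw [hν]; infer_instance
  have hcr : crMeasure n p₁ p₂ = Measure.pi (fun _ : Fin n => ν) := rfl
  set r : ℝ := Real.sqrt n with hrdef
  have hr2 : r ^ 2 = n := Real.sq_sqrt (Nat.cast_nonneg n)
  have hr0 : 0 < r := lt_of_lt_of_le ht htn
  have hn0 : (0 : ℝ) < n := by nlinarith
  set s : ℝ := ε ^ 2 * t * r / 8 with hsdef
  have hs0 : 0 < s := by rw [hsdef]; positivity
  have htr2 : t * r ≤ (n : ℝ) := by nlinarith
  have hε2 : ε ^ 2 ≤ 1 := by nlinarith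
  have hs4n : s ≤ 4 * n := by
    rw [hsdef]
    nlinarith [mul_le_mul_of_nonneg_left htr2 (sq_nonneg ε),
      mul_le_mul_of_nonneg_right hε2 hn0.le]
  -- the six indicator functions
  set fA : Bool × Bool → ℝ := fun x => if x.1 = true then 1 else 0 with hfA
  set fB : Bool × Bool → ℝ := fun x => if x.2 = true then 1 else 0 with hfB
  set fC : Bool × Bool → ℝ := fun x => if x.1 = true ∧ x.2 = true then 1 else 0 with hfC
  have hfA0 : ∀ x, 0 ≤ fA x := by intro x; rw [hfA]; dsimp only; split <;> norm_num
  have hfA1 : ∀ x, fA x ≤ 1 := by intro x; rw [hfA]; dsimp only; split <;> norm_num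
  have hfB0 : ∀ x, 0 ≤ fB x := by intro x; rw [hfB]; dsimp only; split <;> norm_num
  have hfB1 : ∀ x, fB x ≤ 1 := by intro x; rw [hfB]; dsimp only; split <;> norm_num
  have hfC0 : ∀ x, 0 ≤ fC x := by intro x; rw [hfC]; dsimp only; split <;> norm_num
  have hfC1 : ∀ x, fC x ≤ 1 := by intro x; rw [hfC]; dsimp only; split <;> norm_num
  have hgA0 : ∀ x, 0 ≤ 1 - fA x := fun x => by linarith [hfA1 x]
  have hgA1 : ∀ x, 1 - fA x ≤ 1 := fun x => by linarith [hfA0 x]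
  have hgB0 : ∀ x, 0 ≤ 1 - fB x := fun x => by linarith [hfB1 x]
  have hgB1 : ∀ x, 1 - fB x ≤ 1 := fun x => by linarith [hfB0 x]
  have hgC0 : ∀ x, 0 ≤ 1 - fC x := fun x => by linarith [hfC1 x]
  have hgC1 : ∀ x, 1 - fC x ≤ 1 := fun x => by linarith [hfC0 x]
  -- means
  have hmA : ∫ x, fA x ∂ν = p₁ := by
    rw [hν, integral_crStep p₁ p₂ h10 hp₁1 h20 hp₂1, hfA]; norm_num; ring
  have hmB : ∫ x, fB x ∂ν = p₂ := by
    rw [hν, integral_crStep p₁ p₂ h10 hp₁1 h20 hp₂1, hfB]; norm_num; ring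
  have hmC : ∫ x, fC x ∂ν = p₁ * p₂ := by
    rw [hν, integral_crStep p₁ p₂ h10 hp₁1 h20 hp₂1, hfC]; norm_num
  have hsub : ∀ g : Bool × Bool → ℝ, ∫ x, (1 - g x) ∂ν = 1 - ∫ x, g x ∂ν := by
    intro g
    rw [integral_sub (integrable_const _) Integrable.of_finite, integral_const]
    simp
  have hmA' : ∫ x, (1 - fA x) ∂ν = 1 - p₁ := by rw [hsub, hmA]
  have hmB' : ∫ x, (1 - fB x) ∂ν = 1 - p₂ := by rw [hsub, hmB]
  have hmC' : ∫ x, (1 - fC x) ∂ν = 1 - p₁ * p₂ := by rw [hsub, hmC]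
  -- tail bounds
  set e : ℝ := Real.exp (-(s ^ 2) / (8 * n)) with he
  have tail : ∀ (f : Bool × Bool → ℝ), (∀ x, 0 ≤ f x) → (∀ x, f x ≤ 1) →
      crMeasure n p₁ p₂ {ω | (n : ℝ) * (∫ x, f x ∂ν) + s ≤ ∑ i, f (ω i)} ≤
        ENNReal.ofReal e := by
    intro f h0 h1
    rw [hcr, he]
    exact pi_tail_bound ν f h0 h1 n s hs0.le hs4n
  have tA₁ := tail fA hfA0 hfA1
  have tA₂ := tail (fun x => 1 - fA x) hgA0 hgA1
  have tB₁ := tail fB hfB0 hfB1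
  have tB₂ := tail (fun x => 1 - fB x) hgB0 hgB1
  have tC₁ := tail fC hfC0 hfC1
  have tC₂ := tail (fun x => 1 - fC x) hgC0 hgC1
  -- counting identities
  have hsumA : ∀ ω : Fin n → Bool × Bool, ∑ i, fA (ω i) = (captA ω : ℝ) := by
    intro ω; rw [hfA, captA]
    exact sum_ind (fun x => x.1 = true) ω
  have hsumB : ∀ ω : Fin n → Bool × Bool, ∑ i, fB (ω i) = (captB ω : ℝ) := by
    intro ω; rw [hfB, captB]
    exact sum_ind (fun x => x.2 = true) ω
  have hsumC : ∀ ω : Fin n → Bool × Bool, ∑ i, fC (ω i) = (captC ω : ℝ) := by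
    intro ω; rw [hfC, captC]
    exact sum_ind (fun x => x.1 = true ∧ x.2 = true) ω
  have hsumA' : ∀ ω : Fin n → Bool × Bool, ∑ i, (1 - fA (ω i)) = (n : ℝ) - (captA ω : ℝ) := by
    intro ω
    rw [Finset.sum_sub_distrib, Finset.sum_const, hsumA ω]
    simp [mul_comm]
  have hsumB' : ∀ ω : Fin n → Bool × Bool, ∑ i, (1 - fB (ω i)) = (n : ℝ) - (captB ω : ℝ) := by
    intro ω
    rw [Finset.sum_sub_distrib, Finset.sum_const, hsumB ω]
    simp [mul_comm]
  have hsumC' : ∀ ω : Fin n → Bool × Bool, ∑ i, (1 - fC (ω i)) = (n : ℝ) - (captC ω : ℝ) := by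
    intro ω
    rw [Finset.sum_sub_distrib, Finset.sum_const, hsumC ω]
    simp [mul_comm]
  -- inclusion into the union of six tail events
  have hincl :
      {ω : Fin n → Bool × Bool | captC ω = 0 ∨
          |((captA ω : ℝ) * (captB ω : ℝ)) / (captC ω : ℝ) - (n : ℝ)| > t * Real.sqrt n} ⊆
        {ω | (n : ℝ) * (∫ x, fA x ∂ν) + s ≤ ∑ i, fA (ω i)} ∪
          ({ω | (n : ℝ) * (∫ x, (1 - fA x) ∂ν) + s ≤ ∑ i, (1 - fA (ω i))} ∪
            ({ω | (n : ℝ) * (∫ x, fB x ∂ν) + s ≤ ∑ i, fB (ω i)} ∪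
              ({ω | (n : ℝ) * (∫ x, (1 - fB x) ∂ν) + s ≤ ∑ i, (1 - fB (ω i))} ∪
                ({ω | (n : ℝ) * (∫ x, fC x ∂ν) + s ≤ ∑ i, fC (ω i)} ∪
                  {ω | (n : ℝ) * (∫ x, (1 - fC x) ∂ν) + s ≤ ∑ i, (1 - fC (ω i))})))) := by
    intro ω hω
    by_contra hmem
    simp only [Set.mem_union, Set.mem_setOf_eq, not_or, not_le, hmA, hmB, hmC, hmA', hmB',
      hmC', hsumA ω, hsumB ω, hsumC ω, hsumA' ω, hsumB' ω, hsumC' ω] at hmem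
    obtain ⟨e1, e2, e3, e4, e5, e6⟩ := hmem
    have hAabs : |(captA ω : ℝ) - (n : ℝ) * p₁| ≤ s := by
      rw [abs_le]; constructor <;> nlinarith
    have hBabs : |(captB ω : ℝ) - (n : ℝ) * p₂| ≤ s := by
      rw [abs_le]; constructor <;> nlinarith
    have hCabs : |(captC ω : ℝ) - (n : ℝ) * (p₁ * p₂)| ≤ s := by
      rw [abs_le]; constructor <;> nlinarith
    obtain ⟨hC0, hgood⟩ := algebra_key hε0 hε1 hp₁ hp₁1 hp₂ hp₂1 ht hr2 hr0 htn hsdef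
      hAabs hBabs hCabs
    rcases hω with h | h
    · rw [h] at hC0; norm_num at hC0
    · rw [← hrdef] at h; exact absurd hgood (not_le.2 h)
  -- union bound
  have hle := (measure_mono (μ := crMeasure n p₁ p₂) hincl).trans
    ((measure_union_le _ _).trans (add_le_add tA₁ ((measure_union_le _ _).trans
      (add_le_add tA₂ ((measure_union_le _ _).trans (add_le_add tB₁
        ((measure_union_le _ _).trans (add_le_add tB₂ ((measure_union_le _ _).trans
          (add_le_add tC₁ tC₂))))))))))
  refine hle.trans (le_of_eq ?_)
  have hexp : (6 : ℝ) * Real.exp (-(ε ^ 4 / 512) * t ^ 2) = e + (e + (e + (e + (e + e)))) := by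
    rw [he]
    have : -(s ^ 2) / (8 * n) = -(ε ^ 4 / 512) * t ^ 2 := by
      rw [hsdef]
      field_simp
      nlinarith [hr2]
    rw [this]; ring
  have hepos : (0 : ℝ) ≤ e := by rw [he]; positivity
  rw [hexp, ENNReal.ofReal_add hepos (by positivity), ENNReal.ofReal_add hepos (by positivity),
    ENNReal.ofReal_add hepos (by positivity), ENNReal.ofReal_add hepos (by positivity),
    ENNReal.ofReal_add hepos hepos]

/-- For every `ε ∈ (0,1]` there are constants `c₁, c₂ > 0` depending only on `ε` such
that in the capture–recapture model with `n` items and capture probabilities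
`p₁, p₂ ∈ [ε, 1]`, for every `t > 0` the probability that `C = 0` or
`|A·B/C − n| > t·√n` is at most `c₁·exp(−c₂·min(t², n))`. -/
theorem capture_recapture_estimate_concentration
    (ε : ℝ) (hε : ε ∈ Set.Ioc (0 : ℝ) 1) :
    ∃ c₁ c₂ : ℝ, 0 < c₁ ∧ 0 < c₂ ∧
      ∀ (n : ℕ) (p₁ p₂ : ℝ), p₁ ∈ Set.Icc ε 1 → p₂ ∈ Set.Icc ε 1 →
        ∀ t : ℝ, 0 < t →
          crMeasure n p₁ p₂
            {ω | captC ω = 0 ∨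
              |((captA ω : ℝ) * (captB ω : ℝ)) / (captC ω : ℝ) - (n : ℝ)| >
                t * Real.sqrt n} ≤
          ENNReal.ofReal (c₁ * Real.exp (-c₂ * min (t ^ 2) (n : ℝ))) := by
  obtain ⟨hε0, hε1⟩ := hε
  refine ⟨6, ε ^ 4 / 512, by norm_num, by positivity, ?_⟩
  intro n p₁ p₂ hp₁ hp₂ t ht
  obtain ⟨hp₁l, hp₁r⟩ := hp₁
  obtain ⟨hp₂l, hp₂r⟩ := hp₂
  by_cases htn : t ≤ Real.sqrt n
  · have h := main_case ε p₁ p₂ hε0 hε1 hp₁l hp₁r hp₂l hp₂r n t ht htn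
    have ht2 : t ^ 2 ≤ (n : ℝ) := by
      have hr2 : Real.sqrt n ^ 2 = (n : ℝ) := Real.sq_sqrt (Nat.cast_nonneg n)
      nlinarith
    rwa [min_eq_left ht2]
  · push_neg at htn
    rcases Nat.eq_zero_or_pos n with hn | hn
    · subst hn
      have h1 : crMeasure 0 p₁ p₂ {ω | captC ω = 0 ∨
          |((captA ω : ℝ) * (captB ω : ℝ)) / (captC ω : ℝ) - ((0 : ℕ) : ℝ)| >
            t * Real.sqrt (0 : ℕ)} ≤ 1 := prob_le_one
      refine h1.trans ?_
      have : min (t ^ 2) ((0 : ℕ) : ℝ) = 0 := by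
        simp [min_eq_right (sq_nonneg t)]
      rw [this]
      simp only [mul_zero, Real.exp_zero, mul_one]
      exact ENNReal.one_le_ofReal.2 (by norm_num)
    · have hn0 : (0 : ℝ) < n := by exact_mod_cast hn
      have hsq : (0 : ℝ) < Real.sqrt n := Real.sqrt_pos.2 hn0
      have h := main_case ε p₁ p₂ hε0 hε1 hp₁l hp₁r hp₂l hp₂r n (Real.sqrt n) hsq le_rfl
      have hincl : {ω : Fin n → Bool × Bool | captC ω = 0 ∨
            |((captA ω : ℝ) * (captB ω : ℝ)) / (captC ω : ℝ) - (n : ℝ)| > t * Real.sqrt n} ⊆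
          {ω | captC ω = 0 ∨
            |((captA ω : ℝ) * (captB ω : ℝ)) / (captC ω : ℝ) - (n : ℝ)| >
              Real.sqrt n * Real.sqrt n} := by
        intro ω hω
        rcases hω with h' | h'
        · exact Or.inl h'
        · refine Or.inr (lt_trans ?_ h')
          exact mul_lt_mul_of_pos_right htn hsq
      have hr2 : Real.sqrt n ^ 2 = (n : ℝ) := Real.sq_sqrt (Nat.cast_nonneg n)
      have hmin : min (t ^ 2) ((n : ℝ)) = (n : ℝ) := min_eq_right (by nlinarith)
      calc crMeasure n p₁ p₂ _ ≤ crMeasure n p₁ p₂ _ := measure_mono hincl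
        _ ≤ ENNReal.ofReal (6 * Real.exp (-(ε ^ 4 / 512) * Real.sqrt n ^ 2)) := h
        _ = _ := by rw [hmin, hr2]
end

section
/- Let p = p(n) ∈ (0,1) be a sequence with n·p(n)/log n → ∞ as n → ∞. Then the probability that the Erdős–Rényi random graph G(n, p(n)) is connected tends to 1 as n → ∞. -/
open MeasureTheory Filter

/-- Index type for the potential edges of a graph on `Fin n`:
unordered pairs of distinct vertices. -/
abbrev EdgeIdx (n : ℕ) := {e : Sym2 (Fin n) // ¬ e.IsDiag}

/-- The Erdős–Rényi measure `G(n,p)`: the product Bernoulli(p) measure over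
the set of potential edges, encoded as a measure on edge-indicator functions. -/
noncomputable def erMeasure (n : ℕ) (p : ℝ) : Measure (EdgeIdx n → Bool) :=
  Measure.pi fun _ => bernoulliMeasure p

/-- The simple graph on `Fin n` determined by an assignment of
presence/absence to the potential edges. -/
def graphOf {n : ℕ} (ω : EdgeIdx n → Bool) : SimpleGraph (Fin n) :=
  SimpleGraph.fromEdgeSet {e : Sym2 (Fin n) | ∃ h : ¬ e.IsDiag, ω ⟨e, h⟩ = true}

instance inst_s8 (p : ℝ) : IsProbabilityMeasure (bernoulliMeasure p) :=
  PMF.toMeasure.isProbabilityMeasure _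

instance (n : ℕ) (p : ℝ) : IsProbabilityMeasure (erMeasure n p) := by
  unfold erMeasure; infer_instance

/-- Every subset of the (finite) sample space is measurable. -/
lemma ER.meas_all {n : ℕ} (s : Set (EdgeIdx n → Bool)) : MeasurableSet s :=
  s.to_countable.measurableSet

/-- Measure of the cylinder event that every edge in `E` is absent. -/
lemma ER.cylinder (n : ℕ) (p : ℝ) (h0 : 0 < p) (h1 : p < 1) (E : Finset (EdgeIdx n)) :
    erMeasure n p {ω | ∀ e ∈ E, ω e = false} = ENNReal.ofReal (1 - p) ^ E.card := by
  have hb : ∀ e : EdgeIdx n, IsProbabilityMeasure (bernoulliMeasure p) :=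
    fun _ => PMF.toMeasure.isProbabilityMeasure _
  have hset : {ω : EdgeIdx n → Bool | ∀ e ∈ E, ω e = false}
      = Set.univ.pi (fun e => if e ∈ E then {false} else Set.univ) := by
    ext ω
    simp only [Set.mem_setOf_eq, Set.mem_pi, Set.mem_univ, forall_true_left]
    constructor
    · intro h e; split <;> simp_all
    · intro h e he; have := h e; simp_all
  have hfalse : bernoulliMeasure p {false} = ENNReal.ofReal (1 - p) := by
    unfold bernoulliMeasure
    rw [PMF.toMeasure_apply_singleton _ _ (measurableSet_singleton _)]
    simp [PMF.bernoulli, min_eq_left (Real.toNNReal_le_one.2 h1.le), ENNReal.ofReal_sub, h0.le]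
    rfl
  rw [hset, erMeasure, Measure.pi_pi]
  have : ∀ e : EdgeIdx n, bernoulliMeasure p (if e ∈ E then ({false} : Set Bool) else Set.univ)
      = if e ∈ E then ENNReal.ofReal (1 - p) else 1 := by
    intro e; by_cases he : e ∈ E
    · simp [he, hfalse]
    · simp only [if_neg he]; exact (hb e).measure_univ
  simp_rw [this]
  rw [Finset.prod_ite_mem, Finset.univ_inter, Finset.prod_const]

open Classical in
/-- The set of potential edges crossing the cut `(S, Sᶜ)`. -/
noncomputable def ER.crossE {n : ℕ} (S : Finset (Fin n)) : Finset (EdgeIdx n) :=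
  Finset.univ.filter (fun e => ∃ a ∈ S, ∃ b ∈ Sᶜ, e.1 = s(a, b))

lemma ER.crossE_card {n : ℕ} (S : Finset (Fin n)) :
    S.card * Sᶜ.card ≤ (ER.crossE S).card := by
  classical
  rcases (S ×ˢ Sᶜ).eq_empty_or_nonempty with h | ⟨⟨a₀, b₀⟩, h₀⟩
  · rw [← Finset.card_product, h]; simp
  · obtain ⟨ha₀, hb₀⟩ := Finset.mem_product.1 h₀
    have hab₀ : a₀ ≠ b₀ := fun h => (Finset.mem_compl.1 hb₀) (h ▸ ha₀)
    set e₀ : EdgeIdx n := ⟨s(a₀, b₀), by simp [hab₀]⟩ with he₀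
    rw [← Finset.card_product]
    apply Finset.card_le_card_of_injOn
      (fun ab => if h : ¬ (s(ab.1, ab.2) : Sym2 (Fin n)).IsDiag then ⟨s(ab.1, ab.2), h⟩ else e₀)
    · rintro ⟨a, b⟩ hab
      obtain ⟨ha, hb⟩ := Finset.mem_product.1 hab
      have hne : a ≠ b := fun h => (Finset.mem_compl.1 hb) (h ▸ ha)
      have hd : ¬ (s(a, b) : Sym2 (Fin n)).IsDiag := by simp [hne]
      simp only [dif_pos hd]
      exact Finset.mem_filter.2 ⟨Finset.mem_univ _, a, ha, b, hb, rfl⟩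
    · rintro ⟨a, b⟩ hab ⟨a', b'⟩ hab' hfe
      simp only [Finset.coe_product, Set.mem_prod, Finset.mem_coe] at hab hab'
      have hne : a ≠ b := fun h => (Finset.mem_compl.1 hab.2) (h ▸ hab.1)
      have hne' : a' ≠ b' := fun h => (Finset.mem_compl.1 hab'.2) (h ▸ hab'.1)
      have hd : ¬ (s(a, b) : Sym2 (Fin n)).IsDiag := by simp [hne]
      have hd' : ¬ (s(a', b') : Sym2 (Fin n)).IsDiag := by simp [hne']
      simp only [dif_pos hd, dif_pos hd'] at hfe
      have : (s(a, b) : Sym2 (Fin n)) = s(a', b') := congrArg Subtype.val hfe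
      rw [Sym2.eq_iff] at this
      rcases this with ⟨h1, h2⟩ | ⟨h1, h2⟩
      · simp [h1, h2]
      · exact absurd (h1 ▸ hab.1) (Finset.mem_compl.1 hab'.2)

lemma ER.disc_subset (n : ℕ) (hn : 1 ≤ n) :
    {ω : EdgeIdx n → Bool | ¬ (graphOf ω).Connected} ⊆
      ⋃ S ∈ Finset.univ.filter
        (fun S : Finset (Fin n) => S.Nonempty ∧ S ≠ Finset.univ),
        {ω | ∀ e ∈ ER.crossE S, ω e = false} := by
  classical
  intro ω hω
  have hne : Nonempty (Fin n) := ⟨⟨0, hn⟩⟩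
  rw [Set.mem_setOf_eq, SimpleGraph.connected_iff] at hω
  push_neg at hω
  have hpre : ¬ (graphOf ω).Preconnected := fun h => by simp [h, hne] at hω
  rw [SimpleGraph.Preconnected] at hpre
  push_neg at hpre
  obtain ⟨u, v, huv⟩ := hpre
  set S : Finset (Fin n) := Finset.univ.filter (fun x => (graphOf ω).Reachable u x) with hS
  have huS : u ∈ S := by
    simp only [hS, Finset.mem_filter, Finset.mem_univ, true_and]
    exact SimpleGraph.Reachable.refl u
  have hvS : v ∉ S := by simp [hS, huv]
  refine Set.mem_biUnion (Finset.mem_filter.2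
    ⟨Finset.mem_univ _, ⟨u, huS⟩, fun h => hvS (h ▸ Finset.mem_univ v)⟩) ?_
  intro e he
  simp only [ER.crossE, Finset.mem_filter] at he
  obtain ⟨-, a, ha, b, hb, hab⟩ := he
  by_contra hfe
  have hfe' : ω e = true := by revert hfe; cases ω e <;> simp
  have hne' : a ≠ b := fun h => (Finset.mem_compl.1 hb) (h ▸ ha)
  have hd : ¬ (s(a, b) : Sym2 (Fin n)).IsDiag := by simp [hne']
  have hadj : (graphOf ω).Adj a b := by
    rw [graphOf, SimpleGraph.fromEdgeSet_adj]
    refine ⟨⟨hd, ?_⟩, hne'⟩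
    have : e = ⟨s(a, b), hd⟩ := Subtype.ext hab
    rw [← this]; exact hfe'
  have : (graphOf ω).Reachable u b :=
    ((Finset.mem_filter.1 ha).2).trans hadj.reachable
  exact (Finset.mem_compl.1 hb) (by simp [hS, this])

lemma ER.sum_bound (n : ℕ) (p : ℝ) (hn : 2 ≤ n) (h0 : 0 < p) (h1 : p < 1)
    (h6 : 6 * Real.log n ≤ n * p) :
    ∑ S ∈ Finset.univ.filter
        (fun S : Finset (Fin n) => S.Nonempty ∧ S ≠ Finset.univ),
      (1 - p) ^ (S.card * Sᶜ.card) ≤ 2 / n := by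
  classical
  have hn0 : (0:ℝ) < n := by positivity
  set y : ℝ := Real.exp (-(p * n / 2)) with hy
  set x : ℝ := n * y with hx
  have hy0 : 0 < y := Real.exp_pos _
  have hx0 : 0 < x := by positivity
  have hxn : x ≤ ((n:ℝ))⁻¹ * ((n:ℝ))⁻¹ := by
    have hylog : y ≤ Real.exp (-(3 * Real.log n)) := by
      apply Real.exp_le_exp.2; nlinarith
    have hexp3 : Real.exp (-(3 * Real.log n)) = ((n:ℝ))⁻¹ ^ 3 := by
      rw [show -(3 * Real.log (n:ℝ)) = (3:ℕ) * Real.log ((n:ℝ))⁻¹ by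
        rw [Real.log_inv]; push_cast; ring]
      rw [Real.exp_nat_mul, Real.exp_log (by positivity)]
    rw [hexp3] at hylog
    calc x ≤ n * (((n:ℝ))⁻¹ ^ 3) := mul_le_mul_of_nonneg_left hylog hn0.le
      _ = ((n:ℝ))⁻¹ * ((n:ℝ))⁻¹ * (n * ((n:ℝ))⁻¹) := by ring
      _ = ((n:ℝ))⁻¹ * ((n:ℝ))⁻¹ := by rw [mul_inv_cancel₀ hn0.ne', mul_one]
  have hninv : ((n:ℝ))⁻¹ ≤ 1 := by
    apply inv_le_one_of_one_le₀; exact_mod_cast Nat.one_le_of_lt hn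
  have hx1 : x ≤ 1 :=
    hxn.trans (mul_le_one₀ hninv (by positivity) hninv)
  rw [Finset.sum_filter, ← Finset.powerset_univ, Finset.powerset_card_disjiUnion]
  erw [Finset.sum_disjiUnion]
  simp only [Finset.card_univ, Fintype.card_fin]
  have inner : ∀ k ∈ Finset.range (n + 1),
      (∑ S ∈ Finset.powersetCard k (Finset.univ : Finset (Fin n)),
        if S.Nonempty ∧ S ≠ Finset.univ then (1 - p) ^ (S.card * Sᶜ.card) else 0) ≤ x := by
    intro k hk
    rw [Finset.mem_range] at hk
    rcases eq_or_ne k 0 with rfl | hk0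
    · simp only [Finset.powersetCard_zero, Finset.sum_singleton]
      rw [if_neg (by simp)]
      exact hx0.le
    rcases eq_or_ne k n with hkn | hkn
    · have huc : (Finset.univ : Finset (Fin n)).card = k := by simp [hkn]
      rw [← huc, Finset.powersetCard_self, Finset.sum_singleton, if_neg (by simp)]
      exact hx0.le
    have hk1 : 1 ≤ k := Nat.one_le_iff_ne_zero.2 hk0
    have hklt : k < n := lt_of_le_of_ne (Nat.lt_succ_iff.1 hk) hkn
    set m : ℕ := min k (n - k) with hm
    have hm1 : 1 ≤ m := by omega
    have hterm : ∀ S ∈ Finset.powersetCard k (Finset.univ : Finset (Fin n)),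
        (if S.Nonempty ∧ S ≠ Finset.univ then (1 - p) ^ (S.card * Sᶜ.card) else 0)
          = (1 - p) ^ (k * (n - k)) := by
      intro S hS
      have hcard : S.card = k := (Finset.mem_powersetCard.1 hS).2
      have hcc : Sᶜ.card = n - k := by
        rw [Finset.card_compl, hcard, Fintype.card_fin]
      rw [if_pos, hcard, hcc]
      constructor
      · rw [← Finset.card_pos, hcard]; exact hk1
      · intro h
        rw [h, Finset.card_univ, Fintype.card_fin] at hcard
        exact hkn hcard.symm
    rw [Finset.sum_congr rfl hterm, Finset.sum_const, Finset.card_powersetCard,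
      Finset.card_univ, Fintype.card_fin, nsmul_eq_mul]
    have hchoose : ((n.choose k : ℕ) : ℝ) ≤ (n:ℝ) ^ m := by
      have h1' : n.choose k ≤ n ^ m := by
        rcases min_cases k (n - k) with ⟨hmeq, _⟩ | ⟨hmeq, _⟩
        · rw [hm, hmeq]; exact Nat.choose_le_pow n k
        · rw [hm, hmeq, ← Nat.choose_symm hklt.le]; exact Nat.choose_le_pow n (n - k)
      calc ((n.choose k : ℕ) : ℝ) ≤ ((n ^ m : ℕ) : ℝ) := by exact_mod_cast h1'
        _ = (n:ℝ) ^ m := by push_cast; ring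
    have h1p : (0:ℝ) ≤ 1 - p := by linarith
    have hpow : (1 - p) ^ (k * (n - k)) ≤ y ^ m := by
      have step1 : (1 - p) ^ (k * (n - k)) ≤ Real.exp (-p) ^ (k * (n - k)) := by
        apply pow_le_pow_left₀ h1p
        linarith [Real.add_one_le_exp (-p)]
      have step2 : Real.exp (-p) ^ (k * (n - k))
          = Real.exp (-(p * ((k * (n - k) : ℕ) : ℝ))) := by
        rw [← Real.exp_nat_mul]; congr 1; ring
      have hmax : (n:ℝ) / 2 * m ≤ ((k * (n - k) : ℕ) : ℝ) := by
        have hnat : n * m ≤ 2 * (k * (n - k)) := by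
          rcases le_total k (n - k) with hle | hle
          · have hmk : m = k := by omega
            rw [hmk]
            have h2 : n ≤ 2 * (n - k) := by omega
            calc n * k ≤ 2 * (n - k) * k := Nat.mul_le_mul_right k h2
              _ = 2 * (k * (n - k)) := by ring
          · have hmk : m = n - k := by omega
            rw [hmk]
            have h2 : n ≤ 2 * k := by omega
            calc n * (n - k) ≤ 2 * k * (n - k) := Nat.mul_le_mul_right _ h2
              _ = 2 * (k * (n - k)) := by ring
        have := (Nat.cast_le (α := ℝ)).2 hnat
        push_cast at this ⊢
        linarith
      have step3 : Real.exp (-(p * ((k * (n - k) : ℕ) : ℝ))) ≤ y ^ m := by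
        rw [hy, ← Real.exp_nat_mul]
        apply Real.exp_le_exp.2
        have := mul_le_mul_of_nonneg_left hmax h0.le
        nlinarith
      calc (1 - p) ^ (k * (n - k)) ≤ Real.exp (-p) ^ (k * (n - k)) := step1
        _ = Real.exp (-(p * ((k * (n - k) : ℕ) : ℝ))) := step2
        _ ≤ y ^ m := step3
    calc ((n.choose k : ℕ) : ℝ) * (1 - p) ^ (k * (n - k))
        ≤ (n:ℝ) ^ m * y ^ m := by
          apply mul_le_mul hchoose hpow (pow_nonneg h1p _) (by positivity)
      _ = x ^ m := by rw [hx, mul_pow]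
      _ ≤ x ^ 1 := pow_le_pow_of_le_one hx0.le hx1 hm1
      _ = x := pow_one x
  calc ∑ k ∈ Finset.range (n + 1), ∑ S ∈ Finset.powersetCard k (Finset.univ : Finset (Fin n)),
        (if S.Nonempty ∧ S ≠ Finset.univ then (1 - p) ^ (S.card * Sᶜ.card) else 0)
      ≤ ∑ _k ∈ Finset.range (n + 1), x := Finset.sum_le_sum inner
    _ = (n + 1) * x := by
        rw [Finset.sum_const, Finset.card_range, nsmul_eq_mul]; try push_cast; try ring
    _ ≤ (n + 1) * (((n:ℝ))⁻¹ * ((n:ℝ))⁻¹) := mul_le_mul_of_nonneg_left hxn (by positivity)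
    _ ≤ 2 / n := by
        rw [div_eq_mul_inv]
        have heq : ((n:ℝ) + 1) * (((n:ℝ))⁻¹ * ((n:ℝ))⁻¹) = (((n:ℝ) + 1) / n) * ((n:ℝ))⁻¹ := by
          field_simp
        rw [heq]
        apply mul_le_mul_of_nonneg_right _ (by positivity)
        rw [div_le_iff₀ hn0]
        have : (2:ℝ) ≤ n := by exact_mod_cast hn
        linarith

/-- If `n·p(n)/log n → ∞`, then `G(n, p(n))` is connected with probability
tending to `1` as `n → ∞`. -/
theorem er_connected_whp (p : ℕ → ℝ) (hp : ∀ n, p n ∈ Set.Ioo (0 : ℝ) 1)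
    (hd : Tendsto (fun n : ℕ => (n : ℝ) * p n / Real.log n) atTop atTop) :
    Tendsto (fun n : ℕ => erMeasure n (p n) {ω | (graphOf ω).Connected})
      atTop (nhds 1) := by
  classical
  set D : ℕ → ENNReal := fun n => erMeasure n (p n) {ω | (graphOf ω).Connected}ᶜ with hD
  have hev : ∀ᶠ n in atTop, D n ≤ ENNReal.ofReal (2 / n) := by
    have h6' : ∀ᶠ n : ℕ in atTop, 6 ≤ (n : ℝ) * p n / Real.log n := hd.eventually_ge_atTop 6
    filter_upwards [h6', eventually_ge_atTop 2] with n h6 hn2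
    have h0 := (hp n).1
    have h1 := (hp n).2
    have hlog : 0 < Real.log n := by
      apply Real.log_pos
      exact_mod_cast Nat.lt_of_lt_of_le Nat.one_lt_two hn2
    have h6'' : 6 * Real.log n ≤ (n : ℝ) * p n := by
      rw [le_div_iff₀ hlog] at h6; linarith
    set F := Finset.univ.filter
      (fun S : Finset (Fin n) => S.Nonempty ∧ S ≠ Finset.univ) with hF
    have hsub : {ω : EdgeIdx n → Bool | (graphOf ω).Connected}ᶜ ⊆
        ⋃ S ∈ F, {ω | ∀ e ∈ ER.crossE S, ω e = false} := by
      rw [Set.compl_setOf]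
      exact ER.disc_subset n (by omega)
    calc D n ≤ erMeasure n (p n) (⋃ S ∈ F, {ω | ∀ e ∈ ER.crossE S, ω e = false}) :=
          measure_mono hsub
      _ ≤ ∑ S ∈ F, erMeasure n (p n) {ω | ∀ e ∈ ER.crossE S, ω e = false} :=
          measure_biUnion_finset_le _ _
      _ ≤ ∑ S ∈ F, ENNReal.ofReal ((1 - p n) ^ (S.card * Sᶜ.card)) := by
          apply Finset.sum_le_sum
          intro S _
          rw [ER.cylinder n (p n) h0 h1, ← ENNReal.ofReal_pow (by linarith)]
          apply ENNReal.ofReal_le_ofReal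
          apply pow_le_pow_of_le_one (by linarith) (by linarith) (ER.crossE_card S)
      _ = ENNReal.ofReal (∑ S ∈ F, (1 - p n) ^ (S.card * Sᶜ.card)) :=
          (ENNReal.ofReal_sum_of_nonneg (fun S _ => pow_nonneg (by linarith) _)).symm
      _ ≤ ENNReal.ofReal (2 / n) :=
          ENNReal.ofReal_le_ofReal (ER.sum_bound n (p n) hn2 h0 h1 h6'')
  have hD0 : Tendsto D atTop (nhds 0) := by
    apply tendsto_of_tendsto_of_tendsto_of_le_of_le' tendsto_const_nhds _
      (Eventually.of_forall fun n => zero_le) hev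
    have hreal : Tendsto (fun n : ℕ => (2 : ℝ) / n) atTop (nhds 0) :=
      tendsto_const_div_atTop_nhds_zero_nat 2
    have := (ENNReal.tendsto_ofReal hreal)
    simpa using this
  have hrw : ∀ n, erMeasure n (p n) {ω | (graphOf ω).Connected} = 1 - D n := by
    intro n
    have h := prob_compl_eq_one_sub (μ := erMeasure n (p n))
      (s := {ω | (graphOf ω).Connected}) (ER.meas_all _)
    rw [hD]
    simp only []
    rw [h, ENNReal.sub_sub_cancel ENNReal.one_ne_top prob_le_one]
  simp_rw [hrw]
  have hcont : Tendsto (fun z : ENNReal => 1 - z) (nhds 0) (nhds 1) := by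
    have := (ENNReal.continuous_sub_left (a := 1) ENNReal.one_ne_top).tendsto 0
    simpa using this
  exact hcont.comp hD0
end
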